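/- Let T be a tree on a finite nonempty vertex type V, let m be an integer such that every vertex of T has degree at most m, and let G be the m-order V-fractal graph of T. Then for all vertices u, v of T, the distance in G between the original vertices satisfies dist_G(inl u, inl v) = 3·dist_T(u,v). -/

import Mathlib

/-- The `m`-order V-fractal graph of `T`: insert two midpoint vertices on every
edge of `T` (one for each dart) and attach `m - deg_T v` pendant leaves to every
original vertex `v`, so that every original vertex gets degree exactly `m`. -/
def vFractal {V : Type*} [Fintype V] (T : SimpleGraph V) [DecidableRel T.Adj] (m : ℕ) :
    SimpleGraph (V ⊕ (T.Dart ⊕ (Σ v : V, Fin (m - T.degree v)))) :=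
  SimpleGraph.fromRel (fun x y =>
    match x, y with
    | Sum.inl u, Sum.inr (Sum.inl d) => d.fst = u
    | Sum.inr (Sum.inl d), Sum.inr (Sum.inl d') => d' = d.symm
    | Sum.inl u, Sum.inr (Sum.inr p) => u = p.1
    | _, _ => False)

/-!
Every edge of `T` becomes a path of length three in `vFractal T m`, so a walk in `T` lifts to a
walk three times as long. Conversely, the function which is `3 · dist_T(u, w)` at an original
vertex `w` and is interpolated along the subdivided edges and the pendant leaves changes by at
most one along every edge of `vFractal T m`, so no walk from `inl u` to `inl v` is shorter than
`3 · dist_T(u, v)`.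
-/

namespace SimpleGraph

variable {α : Type*} {G : SimpleGraph α} {f : α → ℕ}

theorem Walk.apply_le_apply_add_length (hf : ∀ x y, G.Adj x y → f y ≤ f x + 1) {x y : α}
    (p : G.Walk x y) : f y ≤ f x + p.length := by
  induction p with
  | nil => simp
  | cons h p ih =>
    have := hf _ _ h
    rw [Walk.length_cons]
    omega

theorem Reachable.apply_le_apply_add_dist (hf : ∀ x y, G.Adj x y → f y ≤ f x + 1) {x y : α}
    (h : G.Reachable x y) : f y ≤ f x + G.dist x y := by
  obtain ⟨p, hp⟩ := h.exists_walk_length_eq_dist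
  exact hp ▸ p.apply_le_apply_add_length hf

end SimpleGraph

open SimpleGraph

namespace vFractal

variable {V : Type*} [Fintype V] {T : SimpleGraph V} [DecidableRel T.Adj] {m : ℕ}

theorem adj_inl_dart {a b : V} (h : T.Adj a b) :
    (vFractal T m).Adj (.inl a) (.inr (.inl ⟨(a, b), h⟩)) :=
  ⟨by simp, .inl rfl⟩

theorem adj_dart_dart {a b : V} (h : T.Adj a b) :
    (vFractal T m).Adj (.inr (.inl ⟨(a, b), h⟩)) (.inr (.inl ⟨(b, a), h.symm⟩)) :=
  ⟨by simp [h.ne.symm], .inl rfl⟩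

def liftWalk : {a b : V} → T.Walk a b → (vFractal T m).Walk (.inl a) (.inl b)
  | _, _, .nil => .nil
  | _, _, .cons h p =>
    .cons (adj_inl_dart h) <| .cons (adj_dart_dart h) <|
      .cons (adj_inl_dart h.symm).symm (liftWalk p)

theorem length_liftWalk {a b : V} (p : T.Walk a b) :
    (liftWalk (m := m) p).length = 3 * p.length := by
  induction p with
  | nil => rfl
  | cons h p ih =>
    simp only [liftWalk, Walk.length_cons, ih]
    ring

theorem reachable_inl {u v : V} (h : T.Reachable u v) :
    (vFractal T m).Reachable (.inl u) (.inl v) :=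
  h.elim fun p => ⟨liftWalk p⟩

theorem dist_inl_le {u v : V} (h : T.Reachable u v) :
    (vFractal T m).dist (.inl u) (.inl v) ≤ 3 * T.dist u v := by
  obtain ⟨p, hp⟩ := h.exists_walk_length_eq_dist
  calc (vFractal T m).dist (.inl u) (.inl v) ≤ (liftWalk p).length := dist_le _
    _ = 3 * T.dist u v := by rw [length_liftWalk, hp]

noncomputable def potential (u : V) : V ⊕ (T.Dart ⊕ (Σ v : V, Fin (m - T.degree v))) → ℕ
  | .inl w => 3 * T.dist u w
  | .inr (.inl d) => min (3 * T.dist u d.fst + 1) (3 * T.dist u d.snd + 2)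
  | .inr (.inr p) => 3 * T.dist u p.1 + 1

theorem potential_le_of_adj (u : V) {x y : V ⊕ (T.Dart ⊕ (Σ v : V, Fin (m - T.degree v)))}
    (h : (vFractal T m).Adj x y) : potential u y ≤ potential u x + 1 := by
  rcases x with w | d | p <;> rcases y with w' | d' | p' <;>
    simp only [vFractal, fromRel_adj, ne_eq, Sum.inl.injEq, Sum.inr.injEq, reduceCtorEq,
      not_false_eq_true, true_and, and_false, or_self, or_false, false_or] at h
  · have := d'.adj.diff_dist_adj (u := u)
    simp only [potential, ← h]
    omega
  · simp only [potential, h]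
    omega
  · have := d.adj.diff_dist_adj (u := u)
    simp only [potential, ← h]
    omega
  · obtain rfl : d' = d.symm := h.2.elim id fun h => by rw [h, Dart.symm_symm]
    have := d.adj.diff_dist_adj (u := u)
    simp only [potential, Dart.symm_toProd, Prod.fst_swap, Prod.snd_swap]
    omega
  · simp only [potential, h]
    omega

theorem three_mul_dist_le {u v : V} (h : (vFractal T m).Reachable (.inl u) (.inl v)) :
    3 * T.dist u v ≤ (vFractal T m).dist (.inl u) (.inl v) := by
  simpa [potential] using h.apply_le_apply_add_dist (fun _ _ => potential_le_of_adj u)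

end vFractal

theorem dist_vFractal_general {V : Type*} [Fintype V]
    (T : SimpleGraph V) [DecidableRel T.Adj] (hT : T.IsTree)
    (m : ℕ) (u v : V) :
    (vFractal T m).dist (Sum.inl u) (Sum.inl v) = 3 * T.dist u v := by
  have huv : T.Reachable u v := hT.connected u v
  exact le_antisymm (vFractal.dist_inl_le huv)
    (vFractal.three_mul_dist_le (vFractal.reachable_inl huv))

theorem dist_vFractal {V : Type*} [Fintype V] [Nonempty V]
    (T : SimpleGraph V) [DecidableRel T.Adj] (hT : T.IsTree)
    (m : ℕ) (hdeg : ∀ v : V, T.degree v ≤ m) (u v : V) :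
    (vFractal T m).dist (Sum.inl u) (Sum.inl v) = 3 * T.dist u v :=
  dist_vFractal_general T hT m u v
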